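/- Let {P_i}_{i=1}^M be a POVM on a finite-dimensional complex Hilbert space ℋ with P_i ≠ 0 for all i, and consider the quantum instrument from ℋ to ℋ whose i-th outcome has the single Kraus operator √P_i, i.e. with Choi operators N_i = |√P_i⟩⟩⟨⟨√P_i| (corresponding to the maps ρ ↦ √P_i ρ √P_i). This instrument is extremal if and only if the operators {P_i}_{i=1}^M are linearly independent over ℂ. -/

import Mathlib

open Matrix Kronecker
open scoped ComplexOrder

/-- The rank-one operator `|A⟩⟩⟨⟨B|` on `ℋ₁ ⊗ ℋ₀` built from the vectorizations
`|A⟩⟩ = (A ⊗ I)∑ⱼ |j⟩⊗|j⟩` of linear maps `A B : ℋ₀ → ℋ₁`. -/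
def outerCJ {d₁ d₀ : ℕ} (A B : Matrix (Fin d₁) (Fin d₀) ℂ) :
    Matrix (Fin d₁ × Fin d₀) (Fin d₁ × Fin d₀) ℂ :=
  fun p q => A p.1 p.2 * star (B q.1 q.2)

/-- A quantum instrument with `M` outcomes from `ℋ₀` to `ℋ₁`, described by its
Choi–Jamiołkowski operators: positive semidefinite operators on `ℋ₁ ⊗ ℋ₀` whose
sum has partial trace over `ℋ₁` equal to the identity on `ℋ₀`. -/
def IsInstrument (d₁ d₀ M : ℕ)
    (N : Fin M → Matrix (Fin d₁ × Fin d₀) (Fin d₁ × Fin d₀) ℂ) : Prop :=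
  (∀ i, (N i).PosSemidef) ∧
    Matrix.of (fun j j_ : Fin d₀ => ∑ k : Fin d₁, (∑ i, N i) (k, j) (k, j_))
      = (1 : Matrix (Fin d₀) (Fin d₀) ℂ)

/-!
Write `Kᵢ = √Pᵢ` and `Nᵢ = |Kᵢ⟩⟩⟨⟨Kᵢ|`. A positive operator dominated by the rank-one operator
`Nᵢ` is a scalar multiple of it, so if `N = a X + b Y` with `X, Y` instruments and `a, b > 0`, then
`Xᵢ = sᵢ Nᵢ`, and the normalisation of `X` reads `∑ sᵢ Pᵢ = 1 = ∑ Pᵢ`; linear independence forces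
`sᵢ = 1`. Conversely, a linear dependence `∑ cᵢ Pᵢ = 0`, which may be taken real because the `Pᵢ`
are Hermitian, gives the instruments `(1 ± ε cᵢ) Nᵢ` for small `ε > 0`, whose midpoint is `N`.
-/

namespace Matrix

variable {𝕜 n : Type*} [RCLike 𝕜] [Fintype n]

lemma PosSemidef.conjTranspose_cfc_sqrt_mul_cfc_sqrt [DecidableEq n] {A : Matrix n n 𝕜}
    (hA : A.PosSemidef) : (hA.1.cfc Real.sqrt)ᴴ * hA.1.cfc Real.sqrt = A := by
  have hsqrt : ∀ x ∈ spectrum ℝ A, Real.sqrt x * Real.sqrt x = id x := by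
    intro x hx
    rw [hA.1.spectrum_real_eq_range_eigenvalues] at hx
    obtain ⟨i, rfl⟩ := hx
    exact Real.mul_self_sqrt (hA.eigenvalues_nonneg i)
  have hsqrt_herm : (cfc Real.sqrt A)ᴴ = cfc Real.sqrt A := cfc_predicate Real.sqrt A
  rw [← hA.1.cfc_eq, hsqrt_herm, ← cfc_mul Real.sqrt Real.sqrt A, cfc_congr hsqrt]
  exact cfc_id ℝ A hA.1

lemma PosSemidef.mulVec_eq_zero_of_posSemidef_vecMulVec_sub {v w : n → 𝕜} {X : Matrix n n 𝕜}
    (hX : X.PosSemidef) (h : (vecMulVec v (star v) - X).PosSemidef) (hw : star v ⬝ᵥ w = 0) :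
    X *ᵥ w = 0 := by
  rw [← hX.dotProduct_mulVec_zero_iff]
  have hle := h.dotProduct_mulVec_nonneg w
  rw [sub_mulVec, dotProduct_sub, vecMulVec_mulVec, hw] at hle
  simp only [MulOpposite.op_zero, zero_smul, dotProduct_zero, zero_sub, neg_nonneg] at hle
  exact le_antisymm hle (hX.dotProduct_mulVec_nonneg w)

lemma PosSemidef.exists_eq_smul_vecMulVec_of_posSemidef_sub {v : n → 𝕜} {X : Matrix n n 𝕜}
    (hX : X.PosSemidef) (h : (vecMulVec v (star v) - X).PosSemidef) :
    ∃ t : 𝕜, X = t • vecMulVec v (star v) := by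
  by_cases hv : v = 0
  · refine ⟨0, ext_iff_mulVec.2 fun w => ?_⟩
    rw [zero_smul, zero_mulVec]
    exact hX.mulVec_eq_zero_of_posSemidef_vecMulVec_sub h (by simp [hv])
  set nn := star v ⬝ᵥ v
  have hnn : nn ≠ 0 := fun h0 => hv (dotProduct_star_self_eq_zero.1 h0)
  have hnn_star : star nn = nn := (star_dotProduct v v).symm
  -- `X` kills `v⊥`, so it is determined by `X v`; being Hermitian it then maps `v` into `ℂ v`.
  have hcol : X = nn⁻¹ • vecMulVec (X *ᵥ v) (star v) := by
    refine ext_iff_mulVec.2 fun w => ?_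
    have hperp : star v ⬝ᵥ (w - (nn⁻¹ * (star v ⬝ᵥ w)) • v) = 0 := by
      rw [dotProduct_sub, dotProduct_smul, smul_eq_mul]
      field_simp
      ring
    have hXw := hX.mulVec_eq_zero_of_posSemidef_vecMulVec_sub h hperp
    rw [mulVec_sub, mulVec_smul, sub_eq_zero] at hXw
    rw [hXw, smul_mulVec, vecMulVec_mulVec, op_smul_eq_smul, smul_smul]
  have hrow : X = nn⁻¹ • vecMulVec v (star (X *ᵥ v)) := by
    conv_lhs => rw [← hX.1, hcol]
    rw [conjTranspose_smul, conjTranspose_vecMulVec, star_star, star_inv₀, hnn_star]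
  have hXv : X *ᵥ v = (nn⁻¹ * (star (X *ᵥ v) ⬝ᵥ v)) • v := by
    conv_lhs => rw [hrow]
    rw [smul_mulVec, vecMulVec_mulVec, op_smul_eq_smul, smul_smul]
  refine ⟨nn⁻¹ * (nn⁻¹ * (star (X *ᵥ v) ⬝ᵥ v)), ?_⟩
  conv_lhs => rw [hcol, hXv]
  rw [smul_vecMulVec, smul_smul]

end Matrix

lemma LinearIndependent.complex_of_real_of_isSelfAdjoint {ι E : Type*} [Fintype ι]
    [AddCommGroup E] [Module ℂ E] [Module ℝ E] [IsScalarTower ℝ ℂ E] [StarAddMonoid E]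
    [StarModule ℂ E] {v : ι → E} (hsa : ∀ i, IsSelfAdjoint (v i)) (hv : LinearIndependent ℝ v) :
    LinearIndependent ℂ v := by
  have hre : ∀ g : ι → ℂ, ∑ i, g i • v i = 0 → ∀ i, (g i).re = 0 := by
    intro g hg
    refine Fintype.linearIndependent_iff.1 hv (fun i => (g i).re) ?_
    have hconj : ∑ i, star (g i) • v i = 0 := by
      simpa only [star_sum, star_smul, (hsa _).star_eq, star_zero] using congrArg star hg
    have hterm : ∀ i, (g i).re • v i = (2⁻¹ : ℂ) • (g i • v i + star (g i) • v i) := by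
      intro i
      rw [← add_smul, smul_smul, RCLike.real_smul_eq_coe_smul (K := ℂ), Complex.star_def,
        Complex.add_conj]
      congr 1
      simp
    simp only [hterm, ← Finset.smul_sum, Finset.sum_add_distrib, hg, hconj, add_zero, smul_zero]
  refine Fintype.linearIndependent_iff.2 fun g hg i => Complex.ext (hre g hg i) ?_
  have hIg : ∑ i, (-Complex.I * g i) • v i = 0 := by
    simp only [← smul_smul, ← Finset.smul_sum, hg, smul_zero]
  simpa using hre _ hIg i

lemma eq_zero_of_add_mem_of_sub_mem_of_mem_extremePoints {𝕜 E : Type*} [Field 𝕜] [LinearOrder 𝕜]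
    [IsStrictOrderedRing 𝕜] [AddCommGroup E] [Module 𝕜 E] {A : Set E} {x v : E}
    (hx : x ∈ A.extremePoints 𝕜) (hadd : x + v ∈ A) (hsub : x - v ∈ A) : v = 0 := by
  have hmid : x ∈ openSegment 𝕜 (x + v) (x - v) :=
    ⟨2⁻¹, 2⁻¹, by norm_num, by norm_num, by norm_num, by module⟩
  simpa using hx.2 hadd hsub hmid

lemma exists_pos_forall_abs_mul_le_one {ι : Type*} [Fintype ι] (c : ι → ℝ) :
    ∃ ε > 0, ∀ i, |ε * c i| ≤ 1 := by
  refine ⟨(1 + ∑ i, |c i|)⁻¹, by positivity, fun i => ?_⟩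
  have hle : |c i| ≤ ∑ j, |c j| :=
    Finset.single_le_sum (fun j _ => abs_nonneg (c j)) (Finset.mem_univ i)
  rw [abs_mul, abs_inv, abs_of_pos (by positivity), inv_mul_le_iff₀ (by positivity)]
  linarith

namespace Matrix

variable {m n : Type*} [Fintype m]

def partialTraceFst : Matrix (m × n) (m × n) ℂ →ₗ[ℂ] Matrix n n ℂ where
  toFun N := of fun j j' => ∑ k, N (k, j) (k, j')
  map_add' N N' := by ext; simp [Finset.sum_add_distrib]
  map_smul' c N := by ext; simp [Finset.mul_sum]

end Matrix

section Instrument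

variable {d₁ d₀ M : ℕ}

lemma isInstrument_iff_partialTraceFst {N : Fin M → Matrix (Fin d₁ × Fin d₀) (Fin d₁ × Fin d₀) ℂ} :
    IsInstrument d₁ d₀ M N ↔ (∀ i, (N i).PosSemidef) ∧ partialTraceFst (∑ i, N i) = 1 :=
  Iff.rfl

lemma outerCJ_eq_vecMulVec (A B : Matrix (Fin d₁) (Fin d₀) ℂ) :
    outerCJ A B = vecMulVec (fun p : Fin d₁ × Fin d₀ => A p.1 p.2) (star fun p => B p.1 p.2) :=
  rfl

lemma posSemidef_outerCJ_self (K : Matrix (Fin d₁) (Fin d₀) ℂ) : (outerCJ K K).PosSemidef := by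
  rw [outerCJ_eq_vecMulVec]
  exact posSemidef_vecMulVec_self_star _

lemma outerCJ_self_ne_zero {K : Matrix (Fin d₁) (Fin d₀) ℂ} (hK : K ≠ 0) : outerCJ K K ≠ 0 := by
  refine vecMulVec_ne_zero (fun hv => hK ?_) (star_ne_zero.2 fun hv => hK ?_) <;>
    exact ext fun k j => congrFun hv (k, j)

lemma partialTraceFst_outerCJ (A B : Matrix (Fin d₁) (Fin d₀) ℂ) :
    partialTraceFst (outerCJ A B) = (Bᴴ * A)ᵀ := by
  ext j j'
  simp [partialTraceFst, outerCJ, mul_apply, mul_comm]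

lemma sum_smul_conjTranspose_mul_self_eq_one_of_isInstrument
    {K : Fin M → Matrix (Fin d₁) (Fin d₀) ℂ} {s : Fin M → ℂ}
    (h : IsInstrument d₁ d₀ M fun i => s i • outerCJ (K i) (K i)) :
    ∑ i, s i • ((K i)ᴴ * K i) = 1 := by
  have htr := (isInstrument_iff_partialTraceFst.1 h).2
  simp only [map_sum, map_smul, partialTraceFst_outerCJ, ← transpose_smul, ← transpose_sum]
    at htr
  exact transpose_eq_one.1 htr

lemma isInstrument_smul_outerCJ_iff (K : Fin M → Matrix (Fin d₁) (Fin d₀) ℂ) {c : Fin M → ℝ}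
    (hc : ∀ i, 0 ≤ c i) :
    IsInstrument d₁ d₀ M (fun i => c i • outerCJ (K i) (K i)) ↔
      ∑ i, c i • ((K i)ᴴ * K i) = 1 := by
  simp only [RCLike.real_smul_eq_coe_smul (K := ℂ)]
  refine ⟨sum_smul_conjTranspose_mul_self_eq_one_of_isInstrument,
    fun h => isInstrument_iff_partialTraceFst.2 ⟨?_, ?_⟩⟩
  · exact fun i => (posSemidef_outerCJ_self (K i)).smul (Complex.zero_le_real.2 (hc i))
  · simp only [map_sum, map_smul, partialTraceFst_outerCJ, ← transpose_smul, ← transpose_sum, h,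
      transpose_one]

lemma isInstrument_outerCJ_iff (K : Fin M → Matrix (Fin d₁) (Fin d₀) ℂ) :
    IsInstrument d₁ d₀ M (fun i => outerCJ (K i) (K i)) ↔ ∑ i, (K i)ᴴ * K i = 1 := by
  simpa using isInstrument_smul_outerCJ_iff K (c := 1) fun _ => zero_le_one

lemma mem_extremePoints_of_linearIndependent {K : Fin M → Matrix (Fin d₁) (Fin d₀) ℂ}
    (hsum : ∑ i, (K i)ᴴ * K i = 1) (hK : LinearIndependent ℂ fun i => (K i)ᴴ * K i) :
    (fun i => outerCJ (K i) (K i)) ∈ {W | IsInstrument d₁ d₀ M W}.extremePoints ℝ := by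
  refine ⟨(isInstrument_outerCJ_iff K).2 hsum, fun X hX Y hY ⟨a, b, ha, hb, _, hXY⟩ => ?_⟩
  have hdom : ∀ i, ∃ s : ℂ, X i = s • outerCJ (K i) (K i) := by
    intro i
    have hrest : (outerCJ (K i) (K i) - a • X i).PosSemidef := by
      rw [← congrFun hXY i, Pi.add_apply, Pi.smul_apply, Pi.smul_apply, add_sub_cancel_left]
      exact (hY.1 i).smul hb.le
    rw [outerCJ_eq_vecMulVec] at hrest ⊢
    obtain ⟨t, ht⟩ := ((hX.1 i).smul ha.le).exists_eq_smul_vecMulVec_of_posSemidef_sub hrest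
    refine ⟨(a : ℂ)⁻¹ * t, ?_⟩
    rw [← smul_smul, ← ht, ← Complex.coe_smul, inv_smul_smul₀ (by exact_mod_cast ha.ne')]
  choose s hs using hdom
  have hX_eq : X = fun i => s i • outerCJ (K i) (K i) := funext hs
  have hs_one : ∀ i, s i = 1 := by
    refine hK.eq_coords_of_eq (g := 1) ?_
    rw [hX_eq] at hX
    simpa [hsum] using sum_smul_conjTranspose_mul_self_eq_one_of_isInstrument hX
  simp [hX_eq, hs_one]

lemma linearIndependent_of_mem_extremePoints {K : Fin M → Matrix (Fin d₁) (Fin d₀) ℂ}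
    (hK : ∀ i, K i ≠ 0)
    (hext : (fun i => outerCJ (K i) (K i)) ∈ {W | IsInstrument d₁ d₀ M W}.extremePoints ℝ) :
    LinearIndependent ℝ fun i => (K i)ᴴ * K i := by
  have hsum := (isInstrument_outerCJ_iff K).1 hext.1
  refine Fintype.linearIndependent_iff.2 fun c hc i => ?_
  obtain ⟨ε, hε, hbound⟩ := exists_pos_forall_abs_mul_le_one c
  set v : Fin M → Matrix (Fin d₁ × Fin d₀) (Fin d₁ × Fin d₀) ℂ :=
    fun i => (ε * c i) • outerCJ (K i) (K i)
  have hperturb : ∀ σ : ℝ, |σ| = 1 →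
      (fun i => outerCJ (K i) (K i)) + σ • v ∈ {W | IsInstrument d₁ d₀ M W} := by
    intro σ hσ
    have hfun : (fun i => outerCJ (K i) (K i)) + σ • v =
        fun i => (1 + σ * (ε * c i)) • outerCJ (K i) (K i) := by
      ext1 i
      simp [v, add_smul, smul_smul]
    rw [hfun]
    refine (isInstrument_smul_outerCJ_iff K fun i => ?_).2 ?_
    · have hbound_i := abs_le.1 (hbound i)
      rcases abs_eq (zero_le_one' ℝ) |>.1 hσ with rfl | rfl <;> linarith
    · simp only [add_smul, one_smul, Finset.sum_add_distrib, hsum, ← smul_smul, ← Finset.smul_sum,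
        hc, smul_zero, add_zero]
  have hzero := eq_zero_of_add_mem_of_sub_mem_of_mem_extremePoints hext
    (by simpa using hperturb 1 (by norm_num))
    (by simpa [sub_eq_add_neg] using hperturb (-1) (by norm_num))
  have hi := (smul_eq_zero.1 (congrFun hzero i)).resolve_right (outerCJ_self_ne_zero (hK i))
  exact (mul_eq_zero.1 hi).resolve_left hε.ne'

end Instrument

theorem stmt_18 {d M : ℕ}
    (P : Fin M → Matrix (Fin d) (Fin d) ℂ)
    (hP : ∀ i, (P i).PosSemidef) (hsum : ∑ i, P i = 1)
    (hne : ∀ i, P i ≠ 0) :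
    (fun i => outerCJ ((hP i).1.eigenvectorUnitary.1 * diagonal (((↑) : ℝ → ℂ) ∘ Real.sqrt ∘ (hP i).1.eigenvalues) * (star (hP i).1.eigenvectorUnitary : Matrix (Fin d) (Fin d) ℂ)) ((hP i).1.eigenvectorUnitary.1 * diagonal (((↑) : ℝ → ℂ) ∘ Real.sqrt ∘ (hP i).1.eigenvalues) * (star (hP i).1.eigenvectorUnitary : Matrix (Fin d) (Fin d) ℂ))) ∈
        {W | IsInstrument d d M W}.extremePoints ℝ ↔
      LinearIndependent ℂ P := by
  set K : Fin M → Matrix (Fin d) (Fin d) ℂ := fun i => (hP i).1.cfc Real.sqrt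
  have hKP : (fun i => (K i)ᴴ * K i) = P :=
    funext fun i => (hP i).conjTranspose_cfc_sqrt_mul_cfc_sqrt
  change (fun i => outerCJ (K i) (K i)) ∈ _ ↔ _
  refine ⟨fun hext => ?_, fun hLI => mem_extremePoints_of_linearIndependent (hKP ▸ hsum)
    (hKP ▸ hLI)⟩
  have hK : ∀ i, K i ≠ 0 := fun i hKi => hne i <| by
    rw [← congrFun hKP i, hKi, mul_zero]
  exact hKP ▸ (linearIndependent_of_mem_extremePoints hK hext).complex_of_real_of_isSelfAdjoint
    fun i => isHermitian_conjTranspose_mul_self (K i)
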